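/- arXiv:2312.10876 — 14 statements merged into one kernel-verified Lean document; each statement's English description precedes it below -/
import Mathlib

section
/- Let L be a tense ICRDL-algebra. Then for all x, y in L: G(x → y) ≤ F(x) → F(y) and H(x → y) ≤ P(x) → P(y). -/
/-- An integral commutative residuated distributive lattice (ICRDL-algebra):
a bounded distributive lattice with a commutative monoid operation `mul`
(with identity the top element `⊤`, playing the role of 1) and a residual
implication `imp` satisfying `mul x y ≤ z ↔ x ≤ imp y z`. -/
structure ICRDL (α : Type*) [DistribLattice α] [BoundedOrder α] where
  mul : α → α → α
  imp : α → α → α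
  mul_comm : ∀ x y : α, mul x y = mul y x
  mul_assoc : ∀ x y z : α, mul (mul x y) z = mul x (mul y z)
  mul_one : ∀ x : α, mul x ⊤ = x
  resid : ∀ x y z : α, mul x y ≤ z ↔ x ≤ imp y z

/-- A tense ICRDL-algebra: an ICRDL-algebra with tense operators G, H, F, P. -/
structure TenseICRDL (α : Type*) [DistribLattice α] [BoundedOrder α] extends ICRDL α where
  G : α → α
  H : α → α
  F : α → α
  P : α → α
  T1 : ∀ x y : α, P x ≤ y ↔ x ≤ G y
  T2 : ∀ x y : α, F x ≤ y ↔ x ≤ H y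
  T3G : G ⊥ = ⊥
  T3H : H ⊥ = ⊥
  T4G : ∀ x y : α, mul (G x) (F y) ≤ F (mul x y)
  T4H : ∀ x y : α, mul (H x) (P y) ≤ P (mul x y)
  T5G : ∀ x y : α, G (x ⊔ y) ≤ G x ⊔ F y
  T5H : ∀ x y : α, H (x ⊔ y) ≤ H x ⊔ P y
  T6G : ∀ x y : α, G (imp x y) ≤ imp (G x) (G y)
  T6H : ∀ x y : α, H (imp x y) ≤ imp (H x) (H y)

/-- (T7): G(x → y) ≤ F(x) → F(y) and H(x → y) ≤ P(x) → P(y). -/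
theorem tense_icrdl_T7 {α : Type*} [DistribLattice α] [BoundedOrder α]
    (L : TenseICRDL α) (x y : α) :
    L.G (L.imp x y) ≤ L.imp (L.F x) (L.F y) ∧
    L.H (L.imp x y) ≤ L.imp (L.P x) (L.P y) := by
  have Fmono : ∀ a b : α, a ≤ b → L.F a ≤ L.F b := fun a b h =>
    (L.T2 a (L.F b)).mpr (h.trans ((L.T2 b (L.F b)).mp le_rfl))
  have Pmono : ∀ a b : α, a ≤ b → L.P a ≤ L.P b := fun a b h =>
    (L.T1 a (L.P b)).mpr (h.trans ((L.T1 b (L.P b)).mp le_rfl))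
  have mp : L.mul (L.imp x y) x ≤ y := (L.resid _ _ _).mpr le_rfl
  constructor
  · exact (L.resid _ _ _).mp ((L.T4G _ _).trans (Fmono _ _ mp))
  · exact (L.resid _ _ _).mp ((L.T4H _ _).trans (Pmono _ _ mp))
end

section
/- Let L be a tense ICRDL-algebra. Then for all x, y in L: x·F(y) ≤ F(P(x)·y) and x·P(y) ≤ P(F(x)·y); moreover F(x)·y = 0 if and only if x·P(y) = 0. -/
/-- (T16)-(T17): x·F(y) ≤ F(P(x)·y), x·P(y) ≤ P(F(x)·y), and
F(x)·y = 0 iff x·P(y) = 0. -/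
theorem tense_icrdl_T16_T17 {α : Type*} [DistribLattice α] [BoundedOrder α]
    (L : TenseICRDL α) (x y : α) :
    L.mul x (L.F y) ≤ L.F (L.mul (L.P x) y) ∧
    L.mul x (L.P y) ≤ L.P (L.mul (L.F x) y) ∧
    (L.mul (L.F x) y = ⊥ ↔ L.mul x (L.P y) = ⊥) := by
  -- monotonicity of mul in the left argument
  have mono : ∀ a b c : α, a ≤ b → L.mul a c ≤ L.mul b c := by
    intro a b c h
    have hb : b ≤ L.imp c (L.mul b c) := (L.resid b c _).mp le_rfl
    exact (L.resid a c _).mpr (h.trans hb)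
  have mono' : ∀ a b c : α, b ≤ c → L.mul a b ≤ L.mul a c := by
    intro a b c h
    rw [L.mul_comm a b, L.mul_comm a c]; exact mono b c a h
  -- x ≤ G (P x), x ≤ H (F x)
  have hGP : ∀ a : α, a ≤ L.G (L.P a) := fun a => (L.T1 a _).mp le_rfl
  have hHF : ∀ a : α, a ≤ L.H (L.F a) := fun a => (L.T2 a _).mp le_rfl
  have hPbot : L.P ⊥ = ⊥ := le_bot_iff.mp ((L.T1 ⊥ ⊥).mpr (by simp [L.T3G]))
  have hFbot : L.F ⊥ = ⊥ := le_bot_iff.mp ((L.T2 ⊥ ⊥).mpr (by simp [L.T3H]))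
  have h1 : ∀ a b : α, L.mul a (L.F b) ≤ L.F (L.mul (L.P a) b) := fun a b =>
    le_trans (mono a (L.G (L.P a)) (L.F b) (hGP a)) (L.T4G (L.P a) b)
  have h2 : ∀ a b : α, L.mul a (L.P b) ≤ L.P (L.mul (L.F a) b) := fun a b =>
    le_trans (mono a (L.H (L.F a)) (L.P b) (hHF a)) (L.T4H (L.F a) b)
  refine ⟨h1 x y, h2 x y, ?_, ?_⟩
  · intro h
    have := h2 x y
    rw [h, hPbot] at this
    exact le_bot_iff.mp this
  · intro h
    have := h1 y x
    rw [L.mul_comm (L.P y) x, h, hFbot] at this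
    rw [L.mul_comm]
    exact le_bot_iff.mp this
end

section
/- Let L be a tense ICRDL-algebra. Then for all x, y in L: G(x ∨ H(y)) ≤ G(x) ∨ y and H(x ∨ G(y)) ≤ H(x) ∨ y; moreover x ∨ H(y) = 1 if and only if G(x) ∨ y = 1. -/
/-- (T18)-(T19): G(x ∨ H(y)) ≤ G(x) ∨ y, H(x ∨ G(y)) ≤ H(x) ∨ y, and
x ∨ H(y) = 1 iff G(x) ∨ y = 1. -/
theorem tense_icrdl_T18_T19 {α : Type*} [DistribLattice α] [BoundedOrder α]
    (L : TenseICRDL α) (x y : α) :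
    L.G (x ⊔ L.H y) ≤ L.G x ⊔ y ∧
    L.H (x ⊔ L.G y) ≤ L.H x ⊔ y ∧
    (x ⊔ L.H y = ⊤ ↔ L.G x ⊔ y = ⊤) := by
  have hFH : ∀ z : α, L.F (L.H z) ≤ z := fun z => (L.T2 _ _).mpr le_rfl
  have hPG : ∀ z : α, L.P (L.G z) ≤ z := fun z => (L.T1 _ _).mpr le_rfl
  have h1 : ∀ a b : α, L.G (a ⊔ L.H b) ≤ L.G a ⊔ b := fun a b =>
    (L.T5G a (L.H b)).trans (sup_le_sup_left (hFH b) _)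
  have h2 : ∀ a b : α, L.H (a ⊔ L.G b) ≤ L.H a ⊔ b := fun a b =>
    (L.T5H a (L.G b)).trans (sup_le_sup_left (hPG b) _)
  have hGtop : L.G ⊤ = ⊤ := le_antisymm le_top ((L.T1 _ _).mp le_top)
  have hHtop : L.H ⊤ = ⊤ := le_antisymm le_top ((L.T2 _ _).mp le_top)
  refine ⟨h1 x y, h2 x y, ⟨fun h => ?_, fun h => ?_⟩⟩
  · exact top_le_iff.mp (by calc (⊤ : α) = L.G (x ⊔ L.H y) := by rw [h, hGtop]
        _ ≤ L.G x ⊔ y := h1 x y)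
  · exact top_le_iff.mp (by calc (⊤ : α) = L.H (y ⊔ L.G x) := by rw [sup_comm, h, hHtop]
        _ ≤ L.H y ⊔ x := h2 y x
        _ = x ⊔ L.H y := sup_comm _ _)
end

section
/- Let L be an ICRDL-algebra and let G and H be unary operations on L that are monotone (x ≤ y implies G(x) ≤ G(y) and H(x) ≤ H(y)). Then the condition (T6): G(x → y) ≤ G(x) → G(y) and H(x → y) ≤ H(x) → H(y) for all x, y, holds if and only if the condition (T6'): G(x)·G(y) ≤ G(x·y) and H(x)·H(y) ≤ H(x·y) for all x, y, holds. -/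
/-- For monotone unary operations G and H on an ICRDL-algebra, the condition
(T6) is equivalent to the condition (T6'). -/
theorem icrdl_T6_iff_T6' {α : Type*} [DistribLattice α] [BoundedOrder α]
    (L : ICRDL α) (G H : α → α)
    (hG : ∀ x y : α, x ≤ y → G x ≤ G y) (hH : ∀ x y : α, x ≤ y → H x ≤ H y) :
    ((∀ x y : α, G (L.imp x y) ≤ L.imp (G x) (G y)) ∧
     (∀ x y : α, H (L.imp x y) ≤ L.imp (H x) (H y))) ↔
    ((∀ x y : α, L.mul (G x) (G y) ≤ G (L.mul x y)) ∧
     (∀ x y : α, L.mul (H x) (H y) ≤ H (L.mul x y))) := by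
  constructor
  · rintro ⟨hGimp, hHimp⟩
    have key : ∀ (F : α → α), (∀ x y : α, x ≤ y → F x ≤ F y) →
        (∀ x y : α, F (L.imp x y) ≤ L.imp (F x) (F y)) →
        ∀ x y : α, L.mul (F x) (F y) ≤ F (L.mul x y) := by
      intro F hF hFi x y
      have h1 : x ≤ L.imp y (L.mul x y) := (L.resid x y (L.mul x y)).mp le_rfl
      have h2 : F x ≤ L.imp (F y) (F (L.mul x y)) :=
        le_trans (hF _ _ h1) (hFi y (L.mul x y))
      exact (L.resid (F x) (F y) (F (L.mul x y))).mpr h2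
    exact ⟨key G hG hGimp, key H hH hHimp⟩
  · rintro ⟨hGm, hHm⟩
    have key : ∀ (F : α → α), (∀ x y : α, x ≤ y → F x ≤ F y) →
        (∀ x y : α, L.mul (F x) (F y) ≤ F (L.mul x y)) →
        ∀ x y : α, F (L.imp x y) ≤ L.imp (F x) (F y) := by
      intro F hF hFm x y
      have h1 : L.mul (L.imp x y) x ≤ y := (L.resid _ x y).mpr le_rfl
      have h2 : L.mul (F (L.imp x y)) (F x) ≤ F y :=
        le_trans (hFm _ _) (hF _ _ h1)
      exact (L.resid _ _ _).mp h2
    exact ⟨key G hG hGm, key H hH hHm⟩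
end

section
/- Let L be a tense ICRDL-algebra. Then for all x, y in L: G(x)·F(x → y) ≤ F(y) and H(x)·P(x → y) ≤ P(y). -/
/-- G(x)·F(x → y) ≤ F(y) and H(x)·P(x → y) ≤ P(y). -/
theorem tense_icrdl_prop {α : Type*} [DistribLattice α] [BoundedOrder α]
    (L : TenseICRDL α) (x y : α) :
    L.mul (L.G x) (L.F (L.imp x y)) ≤ L.F y ∧
    L.mul (L.H x) (L.P (L.imp x y)) ≤ L.P y := by
  have hxy : L.mul x (L.imp x y) ≤ y := by
    rw [L.mul_comm]; exact (L.resid _ _ _).mpr le_rfl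
  have Fmono : ∀ a b : α, a ≤ b → L.F a ≤ L.F b := fun a b h =>
    (L.T2 _ _).mpr (h.trans ((L.T2 _ _).mp le_rfl))
  have Pmono : ∀ a b : α, a ≤ b → L.P a ≤ L.P b := fun a b h =>
    (L.T1 _ _).mpr (h.trans ((L.T1 _ _).mp le_rfl))
  exact ⟨(L.T4G x _).trans (Fmono _ _ hxy), (L.T4H x _).trans (Pmono _ _ hxy)⟩
end

section
/- Let L be a tense ICRDL-algebra, with negation defined by ¬x := x → 0. Then for all x in L: (1) G(¬x) ≤ ¬G(x) and H(¬x) ≤ ¬H(x); (2) G(¬x) ≤ ¬F(x) and H(¬x) ≤ ¬P(x); (3) G(x) ≤ ¬F(¬x) and H(x) ≤ ¬P(¬x); (4) F(¬x) ≤ ¬G(x) and P(¬x) ≤ ¬H(x). -/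
/-- Negation properties of the tense operators, where ¬x := x → 0. -/
theorem tense_icrdl_neg {α : Type*} [DistribLattice α] [BoundedOrder α]
    (L : TenseICRDL α) (x : α) :
    (L.G (L.imp x ⊥) ≤ L.imp (L.G x) ⊥ ∧ L.H (L.imp x ⊥) ≤ L.imp (L.H x) ⊥) ∧
    (L.G (L.imp x ⊥) ≤ L.imp (L.F x) ⊥ ∧ L.H (L.imp x ⊥) ≤ L.imp (L.P x) ⊥) ∧
    (L.G x ≤ L.imp (L.F (L.imp x ⊥)) ⊥ ∧ L.H x ≤ L.imp (L.P (L.imp x ⊥)) ⊥) ∧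
    (L.F (L.imp x ⊥) ≤ L.imp (L.G x) ⊥ ∧ L.P (L.imp x ⊥) ≤ L.imp (L.H x) ⊥) := by
  -- basic facts
  have Fbot : L.F ⊥ ≤ (⊥ : α) := (L.T2 ⊥ ⊥).2 bot_le
  have Pbot : L.P ⊥ ≤ (⊥ : α) := (L.T1 ⊥ ⊥).2 bot_le
  have Fmono : ∀ a b : α, a ≤ b → L.F a ≤ L.F b := fun a b h =>
    (L.T2 a (L.F b)).2 (h.trans ((L.T2 b (L.F b)).1 le_rfl))
  have Pmono : ∀ a b : α, a ≤ b → L.P a ≤ L.P b := fun a b h =>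
    (L.T1 a (L.P b)).2 (h.trans ((L.T1 b (L.P b)).1 le_rfl))
  have mxn : L.mul (L.imp x ⊥) x ≤ (⊥ : α) := (L.resid _ _ _).2 le_rfl
  have mnx : L.mul x (L.imp x ⊥) ≤ (⊥ : α) := (L.mul_comm _ _) ▸ mxn
  -- (1)
  have h1G : L.G (L.imp x ⊥) ≤ L.imp (L.G x) ⊥ := by
    have := L.T6G x ⊥; rwa [L.T3G] at this
  have h1H : L.H (L.imp x ⊥) ≤ L.imp (L.H x) ⊥ := by
    have := L.T6H x ⊥; rwa [L.T3H] at this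
  -- (2)
  have h2G : L.G (L.imp x ⊥) ≤ L.imp (L.F x) ⊥ :=
    (L.resid _ _ _).1 ((L.T4G _ _).trans ((Fmono _ _ mxn).trans Fbot))
  have h2H : L.H (L.imp x ⊥) ≤ L.imp (L.P x) ⊥ :=
    (L.resid _ _ _).1 ((L.T4H _ _).trans ((Pmono _ _ mxn).trans Pbot))
  -- (3)
  have h3G : L.G x ≤ L.imp (L.F (L.imp x ⊥)) ⊥ :=
    (L.resid _ _ _).1 ((L.T4G _ _).trans ((Fmono _ _ mnx).trans Fbot))
  have h3H : L.H x ≤ L.imp (L.P (L.imp x ⊥)) ⊥ :=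
    (L.resid _ _ _).1 ((L.T4H _ _).trans ((Pmono _ _ mnx).trans Pbot))
  -- (4)
  have h4G : L.F (L.imp x ⊥) ≤ L.imp (L.G x) ⊥ := by
    refine (L.resid _ _ _).1 ?_
    rw [L.mul_comm]
    exact (L.T4G _ _).trans ((Fmono _ _ mnx).trans Fbot)
  have h4H : L.P (L.imp x ⊥) ≤ L.imp (L.H x) ⊥ := by
    refine (L.resid _ _ _).1 ?_
    rw [L.mul_comm]
    exact (L.T4H _ _).trans ((Pmono _ _ mnx).trans Pbot)
  exact ⟨⟨h1G, h1H⟩, ⟨h2G, h2H⟩, ⟨h3G, h3H⟩, ⟨h4G, h4H⟩⟩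
end

section
/- Let L be a tense ICRDL-algebra that is pseudocomplemented (x ∧ ¬x = 0 for all x) and satisfies (A1): ¬F(¬x) ≤ G(x) for all x, and (A2): ¬P(¬x) ≤ H(x) for all x. Define on the regular elements G_r(x) := ¬¬G(x), H_r(x) := ¬¬H(x), F_r(x) := ¬¬F(x), P_r(x) := ¬¬P(x). Then for every regular element a (i.e. a = ¬¬a): F_r(a) = ¬G_r(¬a), P_r(a) = ¬H_r(¬a), a ≤ G_r(P_r(a)), and a ≤ H_r(F_r(a)). -/
/-- If L is pseudocomplemented and satisfies (A1) and (A2), then on the regular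
elements the operators G_r, H_r, F_r, P_r (double-negations of G, H, F, P)
satisfy F_r(a) = ¬G_r(¬a), P_r(a) = ¬H_r(¬a), a ≤ G_r(P_r(a)) and a ≤ H_r(F_r(a)). -/
theorem tense_icrdl_reg {α : Type*} [DistribLattice α] [BoundedOrder α]
    (L : TenseICRDL α)
    (neg : α → α) (hneg : ∀ x : α, neg x = L.imp x ⊥)
    (pseudo : ∀ x : α, x ⊓ neg x = ⊥)
    (A1 : ∀ x : α, neg (L.F (neg x)) ≤ L.G x)
    (A2 : ∀ x : α, neg (L.P (neg x)) ≤ L.H x)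
    (Gr Hr Fr Pr : α → α)
    (hGr : ∀ x : α, Gr x = neg (neg (L.G x)))
    (hHr : ∀ x : α, Hr x = neg (neg (L.H x)))
    (hFr : ∀ x : α, Fr x = neg (neg (L.F x)))
    (hPr : ∀ x : α, Pr x = neg (neg (L.P x)))
    (a : α) (ha : a = neg (neg a)) :
    Fr a = neg (Gr (neg a)) ∧ Pr a = neg (Hr (neg a)) ∧
    a ≤ Gr (Pr a) ∧ a ≤ Hr (Fr a) := by
  have mono2 : ∀ x y z : α, y ≤ z → L.mul x y ≤ L.mul x z := by
    intro x y z h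
    rw [L.mul_comm x y, L.mul_comm x z, L.resid]
    exact le_trans h ((L.resid z x _).mp le_rfl)
  have lneg : ∀ x y : α, x ≤ neg y ↔ L.mul x y ≤ ⊥ := by
    intro x y; rw [hneg]; exact (L.resid x y ⊥).symm
  have selfneg : ∀ x : α, L.mul x (neg x) ≤ ⊥ := by
    intro x
    rw [L.mul_comm]; exact (lneg _ _).mp le_rfl
  have nn : ∀ x : α, x ≤ neg (neg x) := fun x => (lneg _ _).mpr (selfneg x)
  have anti : ∀ x y : α, x ≤ y → neg y ≤ neg x := by
    intro x y h
    rw [lneg]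
    exact le_trans (mono2 _ _ _ h) (L.mul_comm (neg y) y ▸ selfneg y)
  have n3 : ∀ x : α, neg (neg (neg x)) = neg x :=
    fun x => le_antisymm (anti _ _ (nn x)) (nn (neg x))
  have Fmono : ∀ x y : α, x ≤ y → L.F x ≤ L.F y := fun x y h =>
    (L.T2 _ _).mpr (le_trans h ((L.T2 y (L.F y)).mp le_rfl))
  have Pmono : ∀ x y : α, x ≤ y → L.P x ≤ L.P y := fun x y h =>
    (L.T1 _ _).mpr (le_trans h ((L.T1 y (L.P y)).mp le_rfl))
  have Gmono : ∀ x y : α, x ≤ y → L.G x ≤ L.G y := fun x y h =>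
    (L.T1 (L.G x) y).mp (le_trans ((L.T1 (L.G x) x).mpr le_rfl) h)
  have Hmono : ∀ x y : α, x ≤ y → L.H x ≤ L.H y := fun x y h =>
    (L.T2 (L.H x) y).mp (le_trans ((L.T2 (L.H x) x).mpr le_rfl) h)
  have Fbot : L.F ⊥ = ⊥ := le_antisymm ((L.T2 ⊥ ⊥).mpr bot_le) bot_le
  have Pbot : L.P ⊥ = ⊥ := le_antisymm ((L.T1 ⊥ ⊥).mpr bot_le) bot_le
  have negaa : L.mul (neg a) a ≤ ⊥ := (lneg (neg a) a).mp le_rfl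
  refine ⟨?_, ?_, ?_, ?_⟩
  · -- Fr a = neg (Gr (neg a))
    have h1 : L.mul (L.G (neg a)) (L.F a) ≤ ⊥ :=
      le_trans (L.T4G (neg a) a)
        (le_trans (Fmono _ _ negaa) (le_of_eq Fbot))
    have h2 : L.G (neg a) ≤ neg (L.F a) := (lneg _ _).mpr h1
    have h4 := A1 (neg a)
    rw [← ha] at h4
    rw [hFr, hGr, n3]
    exact le_antisymm (anti _ _ h2) (anti _ _ h4)
  · have h1 : L.mul (L.H (neg a)) (L.P a) ≤ ⊥ :=
      le_trans (L.T4H (neg a) a)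
        (le_trans (Pmono _ _ negaa) (le_of_eq Pbot))
    have h2 : L.H (neg a) ≤ neg (L.P a) := (lneg _ _).mpr h1
    have h4 := A2 (neg a)
    rw [← ha] at h4
    rw [hPr, hHr, n3]
    exact le_antisymm (anti _ _ h2) (anti _ _ h4)
  · rw [hGr, hPr]
    exact le_trans ((L.T1 a (L.P a)).mp le_rfl)
      (le_trans (Gmono _ _ (nn _)) (nn _))
  · rw [hHr, hFr]
    exact le_trans ((L.T2 a (L.F a)).mp le_rfl)
      (le_trans (Hmono _ _ (nn _)) (nn _))
end

section
/- Let A be a DRL-algebra. Then for all x, y in A: (1) ((x ∨ c) ∗ (y ∨ c)) ∨ c = (x ∗ y) ∨ c; and (2) ∼((x ∨ c) ∗ (∼(∼y ∨ c))) ∧ ∼((y ∨ c) ∗ (∼(∼x ∨ c))) = ∼(x ∗ y) ∨ c. -/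
/-- A c-differential residuated lattice (DRL-algebra): a bounded lattice with a
commutative monoid operation `mul` with identity `⊤`, an involution `inv` that is
a dual lattice automorphism, a constant `c` fixed by the involution, a residuation
law for the implication `x ⇒ y := inv (mul x (inv y))`, and the Leibniz condition. -/
structure DRL (α : Type*) [Lattice α] [BoundedOrder α] where
  mul : α → α → α
  inv : α → α
  c : α
  mul_comm : ∀ x y : α, mul x y = mul y x
  mul_assoc : ∀ x y z : α, mul (mul x y) z = mul x (mul y z)
  mul_one : ∀ x : α, mul x ⊤ = x
  inv_inv : ∀ x : α, inv (inv x) = x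
  inv_sup : ∀ x y : α, inv (x ⊔ y) = inv x ⊓ inv y
  inv_inf : ∀ x y : α, inv (x ⊓ y) = inv x ⊔ inv y
  inv_c : inv c = c
  resid : ∀ x y z : α, mul x y ≤ z ↔ x ≤ inv (mul y (inv z))
  leibniz : ∀ x y : α, mul x y ⊓ c = mul (x ⊓ c) y ⊔ mul x (y ⊓ c)

/-- The implication `x ⇒ y := ∼(x ∗ ∼y)` of a DRL-algebra. -/
def DRL.imp {α : Type*} [Lattice α] [BoundedOrder α] (A : DRL α) (x y : α) : α :=
  A.inv (A.mul x (A.inv y))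

section Aux

variable {α : Type*} [Lattice α] [BoundedOrder α] (A : DRL α)

lemma drl_inv_anti {a b : α} (h : a ≤ b) : A.inv b ≤ A.inv a := by
  have : A.inv (a ⊔ b) = A.inv a ⊓ A.inv b := A.inv_sup a b
  rw [sup_eq_right.mpr h] at this
  rw [this]; exact inf_le_left

lemma drl_inv_bot : A.inv (⊥ : α) = ⊤ := by
  have h : ∀ z : α, z ≤ A.inv ⊥ := by
    intro z
    calc z = A.inv (A.inv z) := (A.inv_inv z).symm
    _ ≤ A.inv ⊥ := drl_inv_anti A bot_le
  exact top_unique (h ⊤)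

lemma drl_inv_top : A.inv (⊤ : α) = ⊥ := by
  have := drl_inv_anti A (le_top (a := A.inv (⊥ : α)))
  rw [A.inv_inv] at this
  exact le_bot_iff.mp this

lemma drl_mul_mono_left {a b : α} (d : α) (h : a ≤ b) : A.mul a d ≤ A.mul b d := by
  have hb : A.mul b d ≤ A.mul b d := le_rfl
  have := (A.resid b d (A.mul b d)).mp hb
  exact (A.resid a d (A.mul b d)).mpr (le_trans h this)

lemma drl_mul_mono_right {a b : α} (d : α) (h : a ≤ b) : A.mul d a ≤ A.mul d b := by
  rw [A.mul_comm d a, A.mul_comm d b]; exact drl_mul_mono_left A d h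

lemma drl_mul_le_left (a b : α) : A.mul a b ≤ a := by
  have := drl_mul_mono_right A a (le_top (a := b))
  rwa [A.mul_one] at this

lemma drl_mul_le_right (a b : α) : A.mul a b ≤ b := by
  rw [A.mul_comm]; exact drl_mul_le_left A b a

lemma drl_mul_sup (a b d : α) : A.mul (a ⊔ b) d = A.mul a d ⊔ A.mul b d := by
  apply le_antisymm
  · have ha : a ≤ A.inv (A.mul d (A.inv (A.mul a d ⊔ A.mul b d))) :=
      (A.resid a d _).mp le_sup_left
    have hb : b ≤ A.inv (A.mul d (A.inv (A.mul a d ⊔ A.mul b d))) :=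
      (A.resid b d _).mp le_sup_right
    exact (A.resid _ d _).mpr (sup_le ha hb)
  · exact sup_le (drl_mul_mono_left A d le_sup_left) (drl_mul_mono_left A d le_sup_right)

lemma drl_mul_sup_right (a b d : α) : A.mul d (a ⊔ b) = A.mul d a ⊔ A.mul d b := by
  rw [A.mul_comm d (a ⊔ b), drl_mul_sup, A.mul_comm a d, A.mul_comm b d]

lemma drl_c_mul_c : A.mul A.c A.c = ⊥ := by
  apply le_bot_iff.mp
  apply (A.resid A.c A.c ⊥).mpr
  rw [drl_inv_bot, A.mul_one, A.inv_c]

lemma drl_inv_inj {a b : α} (h : A.inv a = A.inv b) : a = b := by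
  have := congrArg A.inv h
  rwa [A.inv_inv, A.inv_inv] at this

end Aux

/-- Technical lemma for DRL-algebras:
(1) ((x ∨ c) ∗ (y ∨ c)) ∨ c = (x ∗ y) ∨ c, and
(2) ∼((x ∨ c) ∗ ∼(∼y ∨ c)) ∧ ∼((y ∨ c) ∗ ∼(∼x ∨ c)) = ∼(x ∗ y) ∨ c. -/
theorem drl_technical {α : Type*} [Lattice α] [BoundedOrder α]
    (A : DRL α) (x y : α) :
    A.mul (x ⊔ A.c) (y ⊔ A.c) ⊔ A.c = A.mul x y ⊔ A.c ∧
    A.inv (A.mul (x ⊔ A.c) (A.inv (A.inv y ⊔ A.c))) ⊓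
      A.inv (A.mul (y ⊔ A.c) (A.inv (A.inv x ⊔ A.c))) = A.inv (A.mul x y) ⊔ A.c := by
  constructor
  · apply le_antisymm
    · rw [drl_mul_sup, drl_mul_sup_right, drl_mul_sup_right]
      apply sup_le _ le_sup_right
      apply sup_le (sup_le le_sup_left _) (sup_le _ _)
      · exact le_trans (drl_mul_le_right A x A.c) le_sup_right
      · exact le_trans (drl_mul_le_left A A.c y) le_sup_right
      · exact le_trans (drl_mul_le_left A A.c A.c) le_sup_right
    · apply sup_le _ le_sup_right
      refine le_trans ?_ le_sup_left
      exact le_trans (drl_mul_mono_left A _ le_sup_left)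
        (drl_mul_mono_right A _ le_sup_left)
  · -- simplify ∼(∼y ⊔ c) = y ⊓ c
    have hy : A.inv (A.inv y ⊔ A.c) = y ⊓ A.c := by rw [A.inv_sup, A.inv_inv, A.inv_c]
    have hx : A.inv (A.inv x ⊔ A.c) = x ⊓ A.c := by rw [A.inv_sup, A.inv_inv, A.inv_c]
    rw [hx, hy, ← A.inv_sup]
    have hrhs : A.inv (A.mul x y) ⊔ A.c = A.inv (A.mul x y ⊓ A.c) := by
      rw [A.inv_inf, A.inv_c]
    rw [hrhs]
    congr 1
    -- key identity: (x∨c)*(y⊓c) ∨ (y∨c)*(x⊓c) = x*y ⊓ c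
    have hcy : A.mul A.c (y ⊓ A.c) = ⊥ := by
      apply le_bot_iff.mp
      calc A.mul A.c (y ⊓ A.c) ≤ A.mul A.c A.c := drl_mul_mono_right A _ inf_le_right
      _ = ⊥ := drl_c_mul_c A
    have hcx : A.mul A.c (x ⊓ A.c) = ⊥ := by
      apply le_bot_iff.mp
      calc A.mul A.c (x ⊓ A.c) ≤ A.mul A.c A.c := drl_mul_mono_right A _ inf_le_right
      _ = ⊥ := drl_c_mul_c A
    rw [drl_mul_sup A x A.c (y ⊓ A.c), drl_mul_sup A y A.c (x ⊓ A.c), hcy, hcx,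
      sup_bot_eq, sup_bot_eq, A.leibniz x y, A.mul_comm y (x ⊓ A.c), sup_comm]
end

section
/- Let A be a DRL-algebra and let G be a unary operation on A, with F(x) := ∼G(∼x). Then the following conditions are equivalent: (t5) G(x ⇒ y) ≤ G(x) ⇒ G(y) for all x, y; (t7) G(x) ∗ F(∼y) ≤ F(x ∗ (∼y)) for all x, y; (t8) F(x) ∗ G(y) ≤ F(x ∗ y) for all x, y. -/
namespace DRL

variable {α : Type*} [Lattice α] [BoundedOrder α] (A : DRL α)

lemma inv_antitone {x y : α} (h : x ≤ y) : A.inv y ≤ A.inv x :=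
  calc A.inv y = A.inv (x ⊔ y) := by rw [sup_eq_right.mpr h]
    _ = A.inv x ⊓ A.inv y := A.inv_sup x y
    _ ≤ A.inv x := inf_le_left

lemma inv_le_inv_iff {x y : α} : A.inv y ≤ A.inv x ↔ x ≤ y := by
  constructor
  · intro h
    have := A.inv_antitone h
    rwa [A.inv_inv, A.inv_inv] at this
  · exact A.inv_antitone

lemma swap_mp (a b d : α) (h : A.mul a b ≤ A.inv d) : A.mul d b ≤ A.inv a := by
  rw [A.resid, A.inv_inv] at h
  have h2 : A.mul b d ≤ A.inv a := by
    have := A.inv_antitone h; rwa [A.inv_inv] at this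
  rw [A.mul_comm] at h2
  rw [A.resid, A.inv_inv] at h2
  rwa [A.resid, A.inv_inv]

/-- Key swapping lemma: `a ∗ b ≤ ∼d ↔ d ∗ b ≤ ∼a`. -/
lemma swap (a b d : α) : A.mul a b ≤ A.inv d ↔ A.mul d b ≤ A.inv a :=
  ⟨A.swap_mp a b d, A.swap_mp d b a⟩

end DRL

/-- For a unary operation G on a DRL-algebra, with F(x) := ∼G(∼x), the conditions
(t5), (t7) and (t8) are mutually equivalent. -/
theorem drl_t5_t7_t8_equiv {α : Type*} [Lattice α] [BoundedOrder α]
    (A : DRL α) (G : α → α) (F : α → α) (hF : ∀ x : α, F x = A.inv (G (A.inv x))) :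
    ((∀ x y : α, G (A.imp x y) ≤ A.imp (G x) (G y)) ↔
     (∀ x y : α, A.mul (G x) (F (A.inv y)) ≤ F (A.mul x (A.inv y)))) ∧
    ((∀ x y : α, G (A.imp x y) ≤ A.imp (G x) (G y)) ↔
     (∀ x y : α, A.mul (F x) (G y) ≤ F (A.mul x y))) := by
  have h58 : (∀ x y : α, G (A.imp x y) ≤ A.imp (G x) (G y)) ↔
      (∀ x y : α, A.mul (F x) (G y) ≤ F (A.mul x y)) := by
    constructor
    · intro t5 x y
      rw [hF, hF]
      -- goal: mul (∼G(∼x)) (G y) ≤ ∼ G(∼(x∗y))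
      rw [A.swap]
      rw [A.inv_inv]
      have h := t5 y (A.inv x)
      simp only [DRL.imp] at h
      rw [A.resid]
      have e : A.mul y (A.inv (A.inv x)) = A.mul x y := by
        rw [A.inv_inv, A.mul_comm]
      rwa [e] at h
    · intro t8 x y
      simp only [DRL.imp]
      rw [← A.resid]
      -- goal: mul (G (x ⇒ y)) (G x) ≤ G y
      have h := t8 (A.inv y) x
      rw [hF, hF, A.inv_inv] at h
      -- h : mul (∼ G y) (G x) ≤ ∼ G (∼ (∼y ∗ x))
      rw [A.swap, A.inv_inv] at h
      have e : A.inv (A.mul (A.inv y) x) = A.imp x y := by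
        simp only [DRL.imp]
        rw [A.mul_comm]
      rw [e] at h
      exact h
  have h78 : (∀ x y : α, A.mul (G x) (F (A.inv y)) ≤ F (A.mul x (A.inv y))) ↔
      (∀ x y : α, A.mul (F x) (G y) ≤ F (A.mul x y)) := by
    constructor
    · intro t7 x y
      have h := t7 y (A.inv x)
      rw [A.inv_inv] at h
      calc A.mul (F x) (G y) = A.mul (G y) (F x) := A.mul_comm _ _
        _ ≤ F (A.mul y x) := h
        _ = F (A.mul x y) := by rw [A.mul_comm]
    · intro t8 x y
      calc A.mul (G x) (F (A.inv y)) = A.mul (F (A.inv y)) (G x) := A.mul_comm _ _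
        _ ≤ F (A.mul (A.inv y) x) := t8 _ _
        _ = F (A.mul x (A.inv y)) := by rw [A.mul_comm]
  exact ⟨h58.trans h78.symm, h58⟩
end

section
/- Let A be a tense DRL-algebra. Then: (c1) F(c) = c and P(c) = c; (c2) G(x ∨ c) = G(x) ∨ c and H(x ∨ c) = H(x) ∨ c for all x; (c3) F(x ∧ c) = F(x) ∧ c and P(x ∧ c) = P(x) ∧ c for all x. -/
/-- A tense DRL-algebra: a DRL-algebra with tense operators G and H, where
`F x := ∼G(∼x)` and `P x := ∼H(∼x)`. -/
structure TenseDRL (α : Type*) [Lattice α] [BoundedOrder α] extends DRL α where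
  G : α → α
  H : α → α
  t0G : G ⊤ = ⊤
  t0H : H ⊤ = ⊤
  t1G : G c = c
  t1H : H c = c
  t2G : ∀ x y : α, G (x ⊓ y) = G x ⊓ G y
  t2H : ∀ x y : α, H (x ⊓ y) = H x ⊓ H y
  t3G : ∀ x : α, x ≤ G (inv (H (inv x)))
  t3H : ∀ x : α, x ≤ H (inv (G (inv x)))
  t4G : ∀ x y : α, G (x ⊔ y) ≤ G x ⊔ inv (G (inv y))
  t4H : ∀ x y : α, H (x ⊔ y) ≤ H x ⊔ inv (H (inv y))
  t5G : ∀ x y : α, G (inv (mul x (inv y))) ≤ inv (mul (G x) (inv (G y)))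
  t5H : ∀ x y : α, H (inv (mul x (inv y))) ≤ inv (mul (H x) (inv (H y)))

/-- The operator `F x := ∼G(∼x)` of a tense DRL-algebra. -/
def TenseDRL.F {α : Type*} [Lattice α] [BoundedOrder α] (A : TenseDRL α) (x : α) : α :=
  A.inv (A.G (A.inv x))

/-- The operator `P x := ∼H(∼x)` of a tense DRL-algebra. -/
def TenseDRL.P {α : Type*} [Lattice α] [BoundedOrder α] (A : TenseDRL α) (x : α) : α :=
  A.inv (A.H (A.inv x))

/-- (c1)-(c3) for tense DRL-algebras: F(c) = c, P(c) = c, G(x ∨ c) = G(x) ∨ c,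
H(x ∨ c) = H(x) ∨ c, F(x ∧ c) = F(x) ∧ c and P(x ∧ c) = P(x) ∧ c. -/
theorem tense_drl_c1_c2_c3 {α : Type*} [Lattice α] [BoundedOrder α]
    (A : TenseDRL α) :
    (A.F A.c = A.c ∧ A.P A.c = A.c) ∧
    (∀ x : α, A.G (x ⊔ A.c) = A.G x ⊔ A.c ∧ A.H (x ⊔ A.c) = A.H x ⊔ A.c) ∧
    (∀ x : α, A.F (x ⊓ A.c) = A.F x ⊓ A.c ∧ A.P (x ⊓ A.c) = A.P x ⊓ A.c) := by
  have hGmono : ∀ x y : α, x ≤ y → A.G x ≤ A.G y := by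
    intro x y h
    have : A.G (x ⊓ y) = A.G x ⊓ A.G y := A.t2G x y
    rw [inf_eq_left.mpr h] at this
    rw [this]; exact inf_le_right
  have hHmono : ∀ x y : α, x ≤ y → A.H x ≤ A.H y := by
    intro x y h
    have : A.H (x ⊓ y) = A.H x ⊓ A.H y := A.t2H x y
    rw [inf_eq_left.mpr h] at this
    rw [this]; exact inf_le_right
  have hFc : A.F A.c = A.c := by
    unfold TenseDRL.F; rw [A.inv_c, A.t1G, A.inv_c]
  have hPc : A.P A.c = A.c := by
    unfold TenseDRL.P; rw [A.inv_c, A.t1H, A.inv_c]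
  have hGc2 : ∀ x : α, A.G (x ⊔ A.c) = A.G x ⊔ A.c := by
    intro x
    apply le_antisymm
    · have := A.t4G x A.c
      rw [show A.inv (A.G (A.inv A.c)) = A.F A.c from rfl, hFc] at this
      exact this
    · apply sup_le
      · exact hGmono _ _ le_sup_left
      · calc A.c = A.G A.c := A.t1G.symm
          _ ≤ A.G (x ⊔ A.c) := hGmono _ _ le_sup_right
  have hHc2 : ∀ x : α, A.H (x ⊔ A.c) = A.H x ⊔ A.c := by
    intro x
    apply le_antisymm
    · have := A.t4H x A.c
      rw [show A.inv (A.H (A.inv A.c)) = A.P A.c from rfl, hPc] at this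
      exact this
    · apply sup_le
      · exact hHmono _ _ le_sup_left
      · calc A.c = A.H A.c := A.t1H.symm
          _ ≤ A.H (x ⊔ A.c) := hHmono _ _ le_sup_right
  refine ⟨⟨hFc, hPc⟩, fun x => ⟨hGc2 x, hHc2 x⟩, fun x => ⟨?_, ?_⟩⟩
  · show A.inv (A.G (A.inv (x ⊓ A.c))) = A.inv (A.G (A.inv x)) ⊓ A.c
    rw [A.inv_inf, A.inv_c, hGc2, A.inv_sup, A.inv_c]
  · show A.inv (A.H (A.inv (x ⊓ A.c))) = A.inv (A.H (A.inv x)) ⊓ A.c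
    rw [A.inv_inf, A.inv_c, hHc2, A.inv_sup, A.inv_c]
end

section
/- Let L be a tense ICRDL-algebra and let a, b ∈ L with a·b = 0. Then G(a)·F(b) = 0, H(a)·P(b) = 0, F(a)·G(b) = 0, and P(a)·H(b) = 0. (That is, the Kalman set K(L) = {(a,b) ∈ L×L : a·b = 0} is closed under the pair operators G_K(a,b) = (G(a), F(b)), H_K(a,b) = (H(a), P(b)), F_K(a,b) = (F(a), G(b)), and P_K(a,b) = (P(a), H(b)).) -/
/-- The Kalman set K(L) = {(a,b) : a·b = 0} is closed under the pair operators: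
if a·b = 0 then G(a)·F(b) = 0, H(a)·P(b) = 0, F(a)·G(b) = 0 and P(a)·H(b) = 0. -/
theorem tense_icrdl_kalman_closed {α : Type*} [DistribLattice α] [BoundedOrder α]
    (L : TenseICRDL α) (a b : α) (hab : L.mul a b = ⊥) :
    L.mul (L.G a) (L.F b) = ⊥ ∧ L.mul (L.H a) (L.P b) = ⊥ ∧
    L.mul (L.F a) (L.G b) = ⊥ ∧ L.mul (L.P a) (L.H b) = ⊥ := by
  have hF : L.F ⊥ = ⊥ := le_bot_iff.mp ((L.T2 ⊥ ⊥).mpr bot_le)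
  have hP : L.P ⊥ = ⊥ := le_bot_iff.mp ((L.T1 ⊥ ⊥).mpr bot_le)
  have hba : L.mul b a = ⊥ := (L.mul_comm b a).trans hab
  refine ⟨le_bot_iff.mp ?_, le_bot_iff.mp ?_, le_bot_iff.mp ?_, le_bot_iff.mp ?_⟩
  · calc L.mul (L.G a) (L.F b) ≤ L.F (L.mul a b) := L.T4G a b
      _ = ⊥ := by rw [hab, hF]
  · calc L.mul (L.H a) (L.P b) ≤ L.P (L.mul a b) := L.T4H a b
      _ = ⊥ := by rw [hab, hP]
  · calc L.mul (L.F a) (L.G b) = L.mul (L.G b) (L.F a) := L.mul_comm _ _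
      _ ≤ L.F (L.mul b a) := L.T4G b a
      _ = ⊥ := by rw [hba, hF]
  · calc L.mul (L.P a) (L.H b) = L.mul (L.H b) (L.P a) := L.mul_comm _ _
      _ ≤ L.P (L.mul b a) := L.T4H b a
      _ = ⊥ := by rw [hba, hP]
end

section
/- Let L be a tense ICRDL-algebra and let a, b, x, y ∈ L with a·b = 0 and x·y = 0. Then G(a → x) ∧ G(y → b) ≤ (G(a) → G(x)) ∧ (F(y) → F(b)) and G(a)·F(y) ≤ F(a·y); similarly H(a → x) ∧ H(y → b) ≤ (H(a) → H(x)) ∧ (P(y) → P(b)) and H(a)·P(y) ≤ P(a·y). (That is, on the Kalman algebra K(L), with (a,b) ⇒ (x,y) := ((a → x) ∧ (y → b), a·y) and componentwise order (first component ≤, second component ≥), the operators G_K(a,b) = (G(a), F(b)) and H_K(a,b) = (H(a), P(b)) satisfy G_K(u ⇒ v) ≤ G_K(u) ⇒ G_K(v) and H_K(u ⇒ v) ≤ H_K(u) ⇒ H_K(v).) -/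
/-- On the Kalman algebra K(L), the operators G_K and H_K satisfy axiom (t5):
G_K(u ⇒ v) ≤ G_K(u) ⇒ G_K(v) and H_K(u ⇒ v) ≤ H_K(u) ⇒ H_K(v), stated
componentwise for u = (a,b), v = (x,y) in K(L). -/
theorem tense_icrdl_kalman_t5 {α : Type*} [DistribLattice α] [BoundedOrder α]
    (L : TenseICRDL α) (a b x y : α)
    (hab : L.mul a b = ⊥) (hxy : L.mul x y = ⊥) :
    (L.G (L.imp a x) ⊓ L.G (L.imp y b) ≤
        L.imp (L.G a) (L.G x) ⊓ L.imp (L.F y) (L.F b) ∧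
      L.mul (L.G a) (L.F y) ≤ L.F (L.mul a y)) ∧
    (L.H (L.imp a x) ⊓ L.H (L.imp y b) ≤
        L.imp (L.H a) (L.H x) ⊓ L.imp (L.P y) (L.P b) ∧
      L.mul (L.H a) (L.P y) ≤ L.P (L.mul a y)) := by
  have Fmono : ∀ u v : α, u ≤ v → L.F u ≤ L.F v := by
    intro u v huv
    exact (L.T2 u (L.F v)).mpr (huv.trans ((L.T2 v (L.F v)).mp le_rfl))
  have Pmono : ∀ u v : α, u ≤ v → L.P u ≤ L.P v := by
    intro u v huv
    exact (L.T1 u (L.P v)).mpr (huv.trans ((L.T1 v (L.P v)).mp le_rfl))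
  have hyb : L.mul (L.imp y b) y ≤ b := (L.resid _ _ _).mpr le_rfl
  refine ⟨⟨le_inf ?_ ?_, L.T4G a y⟩, ⟨le_inf ?_ ?_, L.T4H a y⟩⟩
  · exact inf_le_left.trans (L.T6G a x)
  · refine inf_le_right.trans ((L.resid _ _ _).mp ?_)
    exact (L.T4G _ _).trans (Fmono _ _ hyb)
  · exact inf_le_left.trans (L.T6H a x)
  · refine inf_le_right.trans ((L.resid _ _ _).mp ?_)
    exact (L.T4H _ _).trans (Pmono _ _ hyb)
end

section
/- Let A be a tense DRL-algebra. Then for all x, y in A: (G(x) ∗ F(y)) ∨ c ≤ F((x ∗ y) ∨ c) and (H(x) ∗ P(y)) ∨ c ≤ P((x ∗ y) ∨ c). (That is, the ICRDL-algebra C(A) = {x ∈ A : c ≤ x}, with product x·y := (x ∗ y) ∨ c, satisfies the tense axiom (T4) for the restrictions of G, H, F, P.) -/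
section Aux
variable {α : Type*} [Lattice α] [BoundedOrder α]

lemma DRL.inv_antitone_s15 (A : DRL α) {x y : α} (h : x ≤ y) : A.inv y ≤ A.inv x := by
  have : A.inv (x ⊔ y) = A.inv x ⊓ A.inv y := A.inv_sup x y
  rw [sup_eq_right.mpr h] at this
  rw [this]; exact inf_le_left

lemma TenseDRL.G_mono (A : TenseDRL α) {x y : α} (h : x ≤ y) : A.G x ≤ A.G y := by
  have : A.G (x ⊓ y) = A.G x ⊓ A.G y := A.t2G x y
  rw [inf_eq_left.mpr h] at this
  rw [this]; exact inf_le_right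

lemma TenseDRL.H_mono (A : TenseDRL α) {x y : α} (h : x ≤ y) : A.H x ≤ A.H y := by
  have : A.H (x ⊓ y) = A.H x ⊓ A.H y := A.t2H x y
  rw [inf_eq_left.mpr h] at this
  rw [this]; exact inf_le_right

lemma TenseDRL.F_mono (A : TenseDRL α) {x y : α} (h : x ≤ y) : A.F x ≤ A.F y :=
  A.toDRL.inv_antitone_s15 (A.G_mono (A.toDRL.inv_antitone_s15 h))

lemma TenseDRL.P_mono (A : TenseDRL α) {x y : α} (h : x ≤ y) : A.P x ≤ A.P y :=
  A.toDRL.inv_antitone_s15 (A.H_mono (A.toDRL.inv_antitone_s15 h))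

end Aux

/-- The ICRDL-algebra C(A) of a tense DRL-algebra A satisfies axiom (T4):
(G(x) ∗ F(y)) ∨ c ≤ F((x ∗ y) ∨ c) and (H(x) ∗ P(y)) ∨ c ≤ P((x ∗ y) ∨ c). -/
theorem tense_drl_C_T4 {α : Type*} [Lattice α] [BoundedOrder α]
    (A : TenseDRL α) (x y : α) :
    A.mul (A.G x) (A.F y) ⊔ A.c ≤ A.F (A.mul x y ⊔ A.c) ∧
    A.mul (A.H x) (A.P y) ⊔ A.c ≤ A.P (A.mul x y ⊔ A.c) := by
  constructor
  · apply sup_le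
    · have h1 : A.G (A.inv (A.mul x (A.inv (A.inv y)))) ≤
          A.inv (A.mul (A.G x) (A.inv (A.G (A.inv y)))) := A.t5G x (A.inv y)
      rw [A.inv_inv y] at h1
      have h2 : A.mul (A.G x) (A.F y) ≤ A.F (A.mul x y) := by
        have := A.toDRL.inv_antitone_s15 h1
        rwa [A.inv_inv] at this
      exact h2.trans (A.F_mono (le_sup_left))
    · have hc : A.F A.c = A.c := by
        unfold TenseDRL.F; rw [A.inv_c, A.t1G, A.inv_c]
      calc A.c = A.F A.c := hc.symm
        _ ≤ A.F (A.mul x y ⊔ A.c) := A.F_mono le_sup_right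
  · apply sup_le
    · have h1 : A.H (A.inv (A.mul x (A.inv (A.inv y)))) ≤
          A.inv (A.mul (A.H x) (A.inv (A.H (A.inv y)))) := A.t5H x (A.inv y)
      rw [A.inv_inv y] at h1
      have h2 : A.mul (A.H x) (A.P y) ≤ A.P (A.mul x y) := by
        have := A.toDRL.inv_antitone_s15 h1
        rwa [A.inv_inv] at this
      exact h2.trans (A.P_mono (le_sup_left))
    · have hc : A.P A.c = A.c := by
        unfold TenseDRL.P; rw [A.inv_c, A.t1H, A.inv_c]
      calc A.c = A.P A.c := hc.symm
        _ ≤ A.P (A.mul x y ⊔ A.c) := A.P_mono le_sup_right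
end

section
/- Let A be a tense DRL-algebra. Then for all x ∈ A: G(x) ∨ c = G(x ∨ c) and ∼G(x) ∨ c = F(∼x ∨ c); similarly H(x) ∨ c = H(x ∨ c) and ∼H(x) ∨ c = P(∼x ∨ c). (That is, the embedding β_A(x) = (x ∨ c, ∼x ∨ c) of A into K(C(A)) commutes with the tense operators: β_A(G(x)) = (G(x ∨ c), F(∼x ∨ c)) and β_A(H(x)) = (H(x ∨ c), P(∼x ∨ c)).) -/
/-- The embedding β(x) = (x ∨ c, ∼x ∨ c) of a tense DRL-algebra A into K(C(A))
commutes with the tense operators: G(x) ∨ c = G(x ∨ c), ∼G(x) ∨ c = F(∼x ∨ c),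
H(x) ∨ c = H(x ∨ c) and ∼H(x) ∨ c = P(∼x ∨ c). -/
theorem tense_drl_beta_commutes {α : Type*} [Lattice α] [BoundedOrder α]
    (A : TenseDRL α) (x : α) :
    (A.G x ⊔ A.c = A.G (x ⊔ A.c) ∧ A.inv (A.G x) ⊔ A.c = A.F (A.inv x ⊔ A.c)) ∧
    (A.H x ⊔ A.c = A.H (x ⊔ A.c) ∧ A.inv (A.H x) ⊔ A.c = A.P (A.inv x ⊔ A.c)) := by

  have monoG : ∀ a b : α, a ≤ b → A.G a ≤ A.G b := by
    intro a b h
    have h2 := A.t2G a b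
    rw [inf_eq_left.mpr h] at h2
    rw [h2]; exact inf_le_right
  have monoH : ∀ a b : α, a ≤ b → A.H a ≤ A.H b := by
    intro a b h
    have h2 := A.t2H a b
    rw [inf_eq_left.mpr h] at h2
    rw [h2]; exact inf_le_right
  refine ⟨⟨?_, ?_⟩, ?_, ?_⟩
  · apply le_antisymm
    · exact sup_le (monoG _ _ le_sup_left)
        (A.t1G.symm.trans_le (monoG A.c (x ⊔ A.c) le_sup_right))
    · calc A.G (x ⊔ A.c) ≤ A.G x ⊔ A.inv (A.G (A.inv A.c)) := A.t4G x A.c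
        _ = A.G x ⊔ A.c := by rw [A.inv_c, A.t1G, A.inv_c]
  · show _ = A.inv (A.G (A.inv (A.inv x ⊔ A.c)))
    rw [A.inv_sup, A.inv_inv, A.inv_c, A.t2G, A.t1G, A.inv_inf, A.inv_c]
  · apply le_antisymm
    · exact sup_le (monoH _ _ le_sup_left)
        (A.t1H.symm.trans_le (monoH A.c (x ⊔ A.c) le_sup_right))
    · calc A.H (x ⊔ A.c) ≤ A.H x ⊔ A.inv (A.H (A.inv A.c)) := A.t4H x A.c
        _ = A.H x ⊔ A.c := by rw [A.inv_c, A.t1H, A.inv_c]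
  · show _ = A.inv (A.H (A.inv (A.inv x ⊔ A.c)))
    rw [A.inv_sup, A.inv_inv, A.inv_c, A.t2H, A.t1H, A.inv_inf, A.inv_c]
end
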